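/- arXiv:2206.08860 — 2 statements merged into one kernel-verified Lean document; each statement's English description precedes it below -/
import Mathlib

section
/- Let G be a connected finite simple graph on n ≥ 3 vertices with q(G) = 2, and let u_1, u_2, …, u_k be distinct vertices forming an independent set such that for every i ∈ {1, …, k} there exists j ≠ i with N(u_i) ∩ N(u_j) ≠ ∅. Then the union over all pairs i ≠ j of the sets N(u_i) ∩ N(u_j) has cardinality at least k. -/
open Matrix

/-- `SOfGraph G` is the set of real symmetric matrices whose off-diagonal zero
pattern is described by the graph `G` (diagonal entries unrestricted). -/
def SOfGraph {V : Type*} [Fintype V] [DecidableEq V] (G : SimpleGraph V) :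
    Set (Matrix V V ℝ) :=
  {A | A.IsSymm ∧ ∀ i j : V, i ≠ j → (A i j ≠ 0 ↔ G.Adj i j)}

/-- `qGraph G` is the minimum number of distinct eigenvalues over matrices in `SOfGraph G`. -/
noncomputable def qGraph {V : Type*} [Fintype V] [DecidableEq V] (G : SimpleGraph V) : ℕ :=
  sInf ((fun A => (spectrum ℝ A).ncard) '' SOfGraph G)

/-- Eccentricity of a vertex: maximum graph distance to any vertex. -/
noncomputable def graphEccent {V : Type*} [Fintype V] (G : SimpleGraph V) (v : V) : ℕ :=
  Finset.univ.sup fun w => G.dist v w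

/-- Double-ended candle `G_k` on `2k` vertices: vertex `i` lies in level `(i+1)/2`,
so level `0` and level `k` have one vertex each and intermediate levels have two;
two vertices are adjacent iff they lie in consecutive levels. -/
def doubleCandle (k : ℕ) : SimpleGraph (Fin (2 * k)) :=
  SimpleGraph.fromRel fun a b => (a.val + 1) / 2 + 1 = (b.val + 1) / 2

/-- Single-ended candle `G'_k` on `2k+1` vertices: vertex `i` lies in level `(i+1)/2`,
so level `0` has one vertex and levels `1,…,k` have two vertices each; two distinct
vertices are adjacent iff they lie in consecutive levels or both lie in level `k`. -/
def singleCandle (k : ℕ) : SimpleGraph (Fin (2 * k + 1)) :=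
  SimpleGraph.fromRel fun a b =>
    (a.val + 1) / 2 + 1 = (b.val + 1) / 2 ∨ ((a.val + 1) / 2 = k ∧ (b.val + 1) / 2 = k)

/-!
If `A ∈ S(G)` has exactly two eigenvalues `l, m`, then `(A - l)(A - m) = 0`, so `A²` lies in the
span of `A` and `1` and vanishes off the diagonal wherever `A` does. For `i ≠ j` the rows `u_i`
and `u_j` of `A` are therefore orthogonal, and since `u_i, u_j` are non-adjacent their products
are supported on common neighbours: the rows restricted to the union `S` of pairwise common
neighbourhoods stay pairwise orthogonal. Each is nonzero on `S` because `u_i` has a neighbour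
there, so these `k` vectors are linearly independent in `ℝ^S`, giving `k ≤ |S|`.
-/

theorem IsSelfAdjoint.sub_algebraMap_mul_sub_algebraMap_eq_zero {A : Type*} [TopologicalSpace A]
    [Ring A] [StarRing A] [Algebra ℝ A] [ContinuousFunctionalCalculus ℝ A IsSelfAdjoint]
    {a : A} (ha : IsSelfAdjoint a) {l m : ℝ} (h : spectrum ℝ a ⊆ {l, m}) :
    (a - algebraMap ℝ A l) * (a - algebraMap ℝ A m) = 0 := by
  have hvanish : Set.EqOn (fun x => (x - l) * (x - m)) 0 (spectrum ℝ a) := by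
    intro x hx
    rcases h hx with rfl | rfl <;> simp
  have := cfc_congr hvanish
  rwa [cfc_mul (fun x => x - l) (fun x => x - m) a, cfc_sub (fun x => x) (fun _ => l) a,
    cfc_sub (fun x => x) (fun _ => m) a, cfc_id' ℝ a, cfc_const l a, cfc_const m a,
    cfc_zero] at this

theorem Matrix.IsSymm.mul_self_apply_eq_zero_of_apply_eq_zero {n : Type*} [Fintype n] [DecidableEq n]
    {A : Matrix n n ℝ} (hA : A.IsSymm) (hspec : (spectrum ℝ A).ncard = 2) {x y : n}
    (hxy : x ≠ y) (hA0 : A x y = 0) : (A * A) x y = 0 := by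
  obtain ⟨l, m, -, hlm⟩ := Set.ncard_eq_two.mp hspec
  have hsa : IsSelfAdjoint A := by
    rw [IsSelfAdjoint, Matrix.star_eq_conjTranspose, Matrix.conjTranspose_eq_transpose_of_trivial]
    exact hA
  have hquad := congrFun (congrFun
    (hsa.sub_algebraMap_mul_sub_algebraMap_eq_zero hlm.subset) x) y
  simpa [sub_mul, mul_sub, Algebra.algebraMap_eq_smul_one, hxy, hA0] using hquad

namespace SOfGraph

variable {V : Type*} [Fintype V] [DecidableEq V] {G : SimpleGraph V} {A : Matrix V V ℝ}

theorem adj_of_apply_ne_zero (hA : A ∈ SOfGraph G) {x y : V} (hxy : x ≠ y) (h : A x y ≠ 0) :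
    G.Adj x y :=
  (hA.2 x y hxy).mp h

theorem apply_eq_zero_of_not_adj (hA : A ∈ SOfGraph G) {x y : V} (hxy : x ≠ y)
    (h : ¬G.Adj x y) : A x y = 0 :=
  not_not.mp (mt (adj_of_apply_ne_zero hA hxy) h)

theorem apply_ne_zero_of_adj (hA : A ∈ SOfGraph G) {x y : V} (h : G.Adj x y) : A x y ≠ 0 :=
  (hA.2 x y h.ne).mpr h

theorem sum_mul_eq_mul_self_apply (hA : A ∈ SOfGraph G) {x y : V} (hxy : x ≠ y)
    (hnadj : ¬G.Adj x y) {T : Finset V} (hT : G.commonNeighbors x y ⊆ T) :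
    ∑ v ∈ T, A x v * A y v = (A * A) x y := by
  rw [Matrix.mul_apply]
  simp_rw [← hA.1.apply y]
  refine Finset.sum_subset (Finset.subset_univ T) fun v _ hvT => ?_
  by_contra hprod
  obtain ⟨hxv, hyv⟩ := mul_ne_zero_iff.mp hprod
  have hvx : v ≠ x := by
    rintro rfl
    exact hnadj (adj_of_apply_ne_zero hA hxy hyv)
  have hvy : v ≠ y := by
    rintro rfl
    exact hnadj (adj_of_apply_ne_zero hA hxy hxv)
  exact hvT (hT ⟨adj_of_apply_ne_zero hA hvx.symm hxv, (adj_of_apply_ne_zero hA hvy hyv).symm⟩)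

end SOfGraph

theorem exists_mem_SOfGraph_ncard_spectrum_eq_qGraph {V : Type*} [Fintype V] [DecidableEq V]
    {G : SimpleGraph V} (hq : qGraph G ≠ 0) :
    ∃ A ∈ SOfGraph G, (spectrum ℝ A).ncard = qGraph G := by
  have hne : ((fun A => (spectrum ℝ A).ncard) '' SOfGraph G).Nonempty := by
    by_contra h
    rw [Set.not_nonempty_iff_eq_empty] at h
    exact hq (by rw [qGraph, h, Nat.sInf_empty])
  exact Nat.sInf_mem hne

theorem Finset.card_le_card_of_pairwise_sum_mul_eq_zero {ι α : Type*} [Fintype ι]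
    (T : Finset α) (f : ι → α → ℝ) (hne : ∀ i, ∃ v ∈ T, f i v ≠ 0)
    (horth : Pairwise fun i j => ∑ v ∈ T, f i v * f j v = 0) :
    Fintype.card ι ≤ T.card := by
  let w : ι → EuclideanSpace ℝ T := fun i => WithLp.toLp 2 fun v => f i v
  have hw (i : ι) : w i ≠ 0 := by
    obtain ⟨v, hvT, hv⟩ := hne i
    intro h0
    exact hv (congrArg (fun x : EuclideanSpace ℝ T => x ⟨v, hvT⟩) h0)
  have hworth : Pairwise fun i j => inner ℝ (w i) (w j) = 0 := by
    intro i j hij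
    simp only [w, EuclideanSpace.inner_eq_star_dotProduct, dotProduct, star_trivial]
    rw [Finset.sum_coe_sort T (fun v => f j v * f i v)]
    exact horth hij.symm
  calc Fintype.card ι ≤ Module.finrank ℝ (EuclideanSpace ℝ T) :=
        (linearIndependent_of_ne_zero_of_inner_eq_zero hw hworth).fintype_card_le_finrank
    _ = T.card := by rw [finrank_euclideanSpace, Fintype.card_coe]

theorem stmt4_general {V : Type*} [Fintype V] [DecidableEq V] (G : SimpleGraph V)
    (hq : qGraph G = 2)
    (k : ℕ) (u : Fin k → V) (hinj : Function.Injective u)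
    (hindep : ∀ i j : Fin k, i ≠ j → ¬ G.Adj (u i) (u j))
    (hcommon : ∀ i : Fin k, ∃ j : Fin k, j ≠ i ∧
      (G.neighborSet (u i) ∩ G.neighborSet (u j)).Nonempty) :
    k ≤ (⋃ (i : Fin k) (j : Fin k) (_ : i ≠ j),
      G.neighborSet (u i) ∩ G.neighborSet (u j)).ncard := by
  set S := ⋃ (i : Fin k) (j : Fin k) (_ : i ≠ j), G.neighborSet (u i) ∩ G.neighborSet (u j)
  obtain ⟨A, hA, hspec⟩ := exists_mem_SOfGraph_ncard_spectrum_eq_qGraph (hq ▸ two_ne_zero)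
  rw [hq] at hspec
  have hT {i j : Fin k} (hij : i ≠ j) : G.commonNeighbors (u i) (u j) ⊆ S.toFinite.toFinset :=
    fun v hv => S.toFinite.mem_toFinset.mpr (Set.mem_iUnion.mpr ⟨i, Set.mem_iUnion₂.mpr ⟨j, hij, hv⟩⟩)
  have hrow (i : Fin k) : ∃ v ∈ S.toFinite.toFinset, A (u i) v ≠ 0 := by
    obtain ⟨j, hji, v, hiv, hjv⟩ := hcommon i
    exact ⟨v, hT hji.symm ⟨hiv, hjv⟩, SOfGraph.apply_ne_zero_of_adj hA hiv⟩
  have horth : Pairwise fun i j => ∑ v ∈ S.toFinite.toFinset, A (u i) v * A (u j) v = 0 := by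
    intro i j hij
    have huij : u i ≠ u j := hinj.ne hij
    rw [SOfGraph.sum_mul_eq_mul_self_apply hA huij (hindep i j hij) (hT hij)]
    exact hA.1.mul_self_apply_eq_zero_of_apply_eq_zero hspec huij
      (SOfGraph.apply_eq_zero_of_not_adj hA huij (hindep i j hij))
  calc k = Fintype.card (Fin k) := (Fintype.card_fin k).symm
    _ ≤ S.toFinite.toFinset.card :=
      Finset.card_le_card_of_pairwise_sum_mul_eq_zero _ (fun i v => A (u i) v) hrow horth
    _ = S.ncard := (Set.ncard_eq_toFinset_card S).symm

/-- If `G` is connected on `n ≥ 3` vertices with `q(G) = 2` and `u_1, …, u_k` is an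
independent set of distinct vertices such that each `u_i` shares a common neighbor
with some `u_j`, `j ≠ i`, then the union of all pairwise common neighborhoods has
at least `k` elements. -/
theorem stmt4 {V : Type*} [Fintype V] [DecidableEq V] (G : SimpleGraph V)
    (hconn : G.Connected) (hn : 3 ≤ Fintype.card V) (hq : qGraph G = 2)
    (k : ℕ) (u : Fin k → V) (hinj : Function.Injective u)
    (hindep : ∀ i j : Fin k, i ≠ j → ¬ G.Adj (u i) (u j))
    (hcommon : ∀ i : Fin k, ∃ j : Fin k, j ≠ i ∧
      (G.neighborSet (u i) ∩ G.neighborSet (u j)).Nonempty) :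
    k ≤ (⋃ (i : Fin k) (j : Fin k) (_ : i ≠ j),
      G.neighborSet (u i) ∩ G.neighborSet (u j)).ncard :=
  stmt4_general G hq k u hinj hindep hcommon
end

section
/- Let G be a connected finite simple graph on an odd number n ≥ 3 of vertices. If there exists a vertex v such that each distance set N_i(v), for i = 1, …, ε(v), is an independent set, then q(G) ≥ 3. -/
open Matrix

/-! If some `A ∈ S(G)` had at most two eigenvalues `l, m`, then `B = A - (l + m) / 2 • 1`
would satisfy `B * B = r • 1`. Parity of the distance to `v` two-colours `G`, so `G` is
triangle-free and the `(i, j)` entry of `B * B` at an edge is `B i j * (B i i + B j j)`, forcing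
`B i i = -B j j`. Writing `B = D + M` with `D` diagonal, `M` then anticommutes with `D`, so
`M * M = r • 1 - D * D`, a diagonal matrix with positive entries because every vertex has a
neighbour; hence `det M ≠ 0`. On the other hand conjugation by the diagonal `±1` matrix of the
colouring negates `M`, so `det M = (-1) ^ n * det M = 0` for odd `n`. -/

open SimpleGraph

theorem SimpleGraph.isBipartite_of_forall_dist_eq_not_adj {V : Type*} {G : SimpleGraph V} {v : V}
    (h : ∀ w₁ w₂ : V, G.dist v w₁ = G.dist v w₂ → ¬ G.Adj w₁ w₂) :
    G.IsBipartite := by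
  have hcol : ∀ {x y}, G.Adj x y → (G.dist v x).bodd ≠ (G.dist v y).bodd := by
    intro x y hxy
    have hne : G.dist v x ≠ G.dist v y := (h x y · hxy)
    rcases hxy.diff_dist_adj (u := v) with hd | hd | hd
    · exact absurd hd.symm hne
    · simp [hd]
    · have : G.dist v x = G.dist v y + 1 := by omega
      simp [this]
  simpa using (Coloring.mk _ hcol).colorable

namespace Matrix

variable {n R : Type*} [Fintype n] [DecidableEq n] [CommRing R]

theorem det_eq_zero_of_mul_mul_eq_neg [NoZeroDivisors R] [CharZero R] {S M : Matrix n n R}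
    (hS : S * S = 1) (hSM : S * M * S = -M) (hn : Odd (Fintype.card n)) : M.det = 0 := by
  have hdetS : S.det * S.det = 1 := by rw [← det_mul, hS, det_one]
  have h := congrArg det hSM
  rw [det_mul, det_mul, det_neg, hn.neg_one_pow, neg_one_mul, mul_right_comm, hdetS, one_mul] at h
  exact CharZero.eq_neg_self_iff.mp h

theorem diagonal_mul_add_mul_diagonal_apply (d : n → R) (M : Matrix n n R) (i j : n) :
    (diagonal d * M + M * diagonal d) i j = (d i + d j) * M i j := by
  simp only [add_apply, diagonal_mul, mul_diagonal]
  ring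

theorem sq_diag_lt_of_mul_self_eq_smul_one [LinearOrder R] [IsStrictOrderedRing R]
    {B : Matrix n n R} (hB : B.IsSymm) {r : R} (hBB : B * B = r • 1)
    {i j : n} (hij : i ≠ j) (hBij : B i j ≠ 0) : B i i ^ 2 < r := by
  have hrow : ∑ k, B i k ^ 2 = r := by
    simpa [mul_apply, sq, hB.apply] using congrFun (congrFun hBB i) i
  have hpair : B i i ^ 2 + B i j ^ 2 ≤ ∑ k, B i k ^ 2 := by
    rw [← Finset.sum_pair (f := fun k => B i k ^ 2) hij]
    exact Finset.sum_le_sum_of_subset_of_nonneg (Finset.subset_univ _) fun k _ _ => sq_nonneg _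
  have := pow_pos (abs_pos.mpr hBij) 2
  rw [sq_abs] at this
  linarith

end Matrix

namespace SimpleGraph.Coloring

variable {V R : Type*} [Fintype V] [DecidableEq V] [CommRing R] {G : SimpleGraph V}

def signDiagonal (C : G.Coloring (Fin 2)) : Matrix V V R :=
  diagonal fun i => (-1) ^ (C i : ℕ)

theorem signDiagonal_mul_self (C : G.Coloring (Fin 2)) :
    C.signDiagonal * C.signDiagonal = (1 : Matrix V V R) := by
  simp only [signDiagonal, diagonal_mul_diagonal, ← pow_add, ← two_mul, pow_mul, neg_one_sq,
    one_pow, diagonal_one]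

theorem signDiagonal_mul_mul_signDiagonal (C : G.Coloring (Fin 2))
    {M : Matrix V V R} (hM : ∀ i j, M i j ≠ 0 → G.Adj i j) :
    C.signDiagonal * M * C.signDiagonal = -M := by
  ext i j
  simp only [signDiagonal, diagonal_mul, mul_diagonal, Matrix.neg_apply]
  by_cases hij : M i j = 0
  · simp [hij]
  · have : (C i : ℕ) + C j = 1 := by have := C.valid (hM i j hij); omega
    rw [mul_right_comm, ← pow_add, this, pow_one, neg_one_mul]

end SimpleGraph.Coloring

section SOfGraph

variable {V : Type*} [Fintype V] [DecidableEq V] {G : SimpleGraph V}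

theorem sOfGraph_nonempty (G : SimpleGraph V) : (SOfGraph G).Nonempty := by
  classical
  exact ⟨G.adjMatrix ℝ, G.isSymm_adjMatrix, fun i j _ => by simp⟩

theorem le_qGraph_of_forall {k : ℕ} (h : ∀ A ∈ SOfGraph G, k ≤ (spectrum ℝ A).ncard) :
    k ≤ qGraph G :=
  le_csInf ((sOfGraph_nonempty G).image _) (by simpa using h)

theorem sub_smul_one_mem_sOfGraph {A : Matrix V V ℝ} (hA : A ∈ SOfGraph G) (t : ℝ) :
    A - t • 1 ∈ SOfGraph G :=
  ⟨hA.1.sub (isSymm_one.smul t), fun i j hij => by simpa [one_apply_ne hij] using hA.2 i j hij⟩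

theorem diag_add_diag_eq_zero_of_adj (hG : G.CliqueFree 3) {B : Matrix V V ℝ}
    (hB : B ∈ SOfGraph G) {r : ℝ} (hBB : B * B = r • 1) {i j : V} (hij : G.Adj i j) :
    B i i + B j j = 0 := by
  have hmiddle : ∀ k, k ≠ i → k ≠ j → B i k * B k j = 0 := by
    intro k hki hkj
    by_contra hne
    obtain ⟨hik, hkj'⟩ := mul_ne_zero_iff.mp hne
    exact hG {i, k, j} (is3Clique_triple_iff.mpr
      ⟨(hB.2 i k hki.symm).mp hik, hij, (hB.2 k j hkj).mp hkj'⟩)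
  have h := congrFun (congrFun hBB i) j
  rw [mul_apply, Fintype.sum_eq_add (f := fun k => B i k * B k j) i j hij.ne
    fun k ⟨hki, hkj⟩ => hmiddle k hki hkj] at h
  simp only [Matrix.smul_apply, one_apply_ne hij.ne, smul_zero] at h
  have hBij : B i j ≠ 0 := (hB.2 i j hij.ne).mpr hij
  exact (mul_eq_zero.mp (by linear_combination h : B i j * (B i i + B j j) = 0)).resolve_left hBij

theorem even_card_of_mul_self_eq_smul_one (hG : G.IsBipartite) (hdeg : ∀ i, ∃ j, G.Adj i j)
    {B : Matrix V V ℝ} (hB : B ∈ SOfGraph G) {r : ℝ} (hBB : B * B = r • 1) :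
    Even (Fintype.card V) := by
  have hG3 : G.CliqueFree 3 := Colorable.cliqueFree hG (by norm_num)
  obtain ⟨C⟩ := hG
  set D := diagonal fun i => B i i
  set M : Matrix V V ℝ := of fun i j => if i = j then 0 else B i j
  have hM_adj : ∀ i j, M i j ≠ 0 → G.Adj i j := fun i j hij => by
    by_cases h : i = j <;> simp_all [M, hB.2 i j]
  have hBDM : B = D + M := by
    ext i j
    by_cases h : i = j <;> simp [D, M, h]
  have hDM : D * M + M * D = 0 := by
    ext i j
    rw [diagonal_mul_add_mul_diagonal_apply, Matrix.zero_apply]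
    by_cases h : M i j = 0
    · rw [h, mul_zero]
    · rw [diag_add_diag_eq_zero_of_adj hG3 hB hBB (hM_adj i j h), zero_mul]
  have hMM : M * M = diagonal fun i => r - B i i ^ 2 := by
    have : B * B = D * D + (D * M + M * D) + M * M := by rw [hBDM]; noncomm_ring
    rw [hDM, add_zero, hBB] at this
    rw [eq_sub_of_add_eq' this.symm, smul_one_eq_diagonal, diagonal_mul_diagonal, diagonal_sub]
    simp only [sq]
  have hdet_pos : 0 < M.det * M.det := by
    rw [← det_mul, hMM, det_diagonal]
    refine Finset.prod_pos fun i _ => sub_pos.mpr ?_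
    obtain ⟨j, hij⟩ := hdeg i
    exact sq_diag_lt_of_mul_self_eq_smul_one hB.1 hBB hij.ne ((hB.2 i j hij.ne).mpr hij)
  by_contra hodd
  have hdet : M.det = 0 := det_eq_zero_of_mul_mul_eq_neg C.signDiagonal_mul_self
    (C.signDiagonal_mul_mul_signDiagonal hM_adj) (Nat.not_even_iff_odd.mp hodd)
  simp [hdet] at hdet_pos

end SOfGraph

theorem Set.exists_subset_pair_of_ncard_le_two {α : Type*} [Inhabited α] {s : Set α}
    (hs : s.Finite) (h : s.ncard ≤ 2) : ∃ a b, s ⊆ {a, b} := by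
  interval_cases hc : s.ncard
  · rw [Set.ncard_eq_zero hs] at hc
    exact ⟨default, default, by simp [hc]⟩
  · obtain ⟨a, rfl⟩ := Set.ncard_eq_one.mp hc
    exact ⟨a, a, by simp⟩
  · obtain ⟨a, b, -, rfl⟩ := Set.ncard_eq_two.mp hc
    exact ⟨a, b, subset_rfl⟩

theorem IsSelfAdjoint.sub_mul_sub_eq_of_spectrum_subset_pair {A : Type*} [Ring A] [StarRing A]
    [Algebra ℝ A] [TopologicalSpace A] [ContinuousFunctionalCalculus ℝ A IsSelfAdjoint]
    {a : A} (ha : IsSelfAdjoint a) {l m : ℝ} (h : spectrum ℝ a ⊆ {l, m}) :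
    (a - algebraMap ℝ A ((l + m) / 2)) * (a - algebraMap ℝ A ((l + m) / 2)) =
      algebraMap ℝ A (((l - m) / 2) ^ 2) := by
  set t := (l + m) / 2
  have key :
      cfc (fun x : ℝ => (x - t) * (x - t)) a = cfc (fun _ : ℝ => ((l - m) / 2) ^ 2) a := by
    refine cfc_congr fun x hx => ?_
    rcases h hx with rfl | rfl <;> ring
  rwa [cfc_mul (fun x => x - t) (fun x => x - t), cfc_sub (fun x => x) (fun _ => t), cfc_id' ℝ a,
    cfc_const t a, cfc_const _ a] at key

theorem Matrix.IsSymm.exists_mul_self_eq_smul_one {V : Type*} [Fintype V] [DecidableEq V]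
    {A : Matrix V V ℝ} (hA : A.IsSymm) (h : (spectrum ℝ A).ncard ≤ 2) :
    ∃ t r : ℝ, (A - t • 1) * (A - t • 1) = r • 1 := by
  obtain ⟨l, m, hlm⟩ := Set.exists_subset_pair_of_ncard_le_two (Matrix.finite_spectrum A) h
  refine ⟨(l + m) / 2, ((l - m) / 2) ^ 2, ?_⟩
  have hA' : IsSelfAdjoint A := isHermitian_iff_isSelfAdjoint.mp (isHermitian_iff_isSymm.mpr hA)
  simpa only [Algebra.algebraMap_eq_smul_one] using
    hA'.sub_mul_sub_eq_of_spectrum_subset_pair hlm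

theorem three_le_qGraph_of_isBipartite {V : Type*} [Fintype V] [DecidableEq V]
    {G : SimpleGraph V} (hG : G.IsBipartite) (hodd : Odd (Fintype.card V))
    (hdeg : ∀ i, ∃ j, G.Adj i j) : 3 ≤ qGraph G := by
  refine le_qGraph_of_forall fun A hA => ?_
  by_contra! hlt
  obtain ⟨t, r, h⟩ := hA.1.exists_mul_self_eq_smul_one (by omega)
  exact Nat.not_even_iff_odd.mpr hodd
    (even_card_of_mul_self_eq_smul_one hG hdeg (sub_smul_one_mem_sOfGraph hA t) h)

/-- If `G` is connected on an odd number `n ≥ 3` of vertices and there is a vertex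
`v` such that each distance set `N_i(v)` is independent, then `q(G) ≥ 3`. -/
theorem stmt14 {V : Type*} [Fintype V] [DecidableEq V] (G : SimpleGraph V)
    (hconn : G.Connected) (hodd : Odd (Fintype.card V)) (hn : 3 ≤ Fintype.card V)
    (v : V)
    (hind : ∀ w₁ w₂ : V, G.dist v w₁ = G.dist v w₂ → ¬ G.Adj w₁ w₂) :
    3 ≤ qGraph G := by
  have : Nontrivial V := Fintype.one_lt_card_iff_nontrivial.mp (by omega)
  exact three_le_qGraph_of_isBipartite (isBipartite_of_forall_dist_eq_not_adj hind) hodd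
    hconn.preconnected.exists_adj_of_nontrivial
end
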